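/- Let T > 0 and β ∈ (0,1]. Let f : ℝ^n × ℝ → ℝ^n be continuous and Lipschitz in its first argument with constant K uniformly for t ∈ [0,T]; let C be an m × n real matrix; let L : [0,T] → ℝ^{n×m}, x : [0,T] → ℝ^n, and u : [0,T] → ℝ^p be continuous; let B be an n × p matrix; and let x̂₀ ∈ ℝ^n. Let x̂* : [0,T] → ℝ^n be the (unique) continuously differentiable solution of x̂*'(t) = f(x̂*(t),t) + L(t)C(x(t) − x̂*(t)) + B u(t) with x̂*(0) = x̂₀. Suppose h_N : [0,T] → ℝ^n is a sequence of continuously differentiable functions such that: (i) there exists M with ‖h_N(t)‖ ≤ M for all N and t; (ii) all h_N are β-Hölder with a common constant C_H; (iii) h_N(0) → x̂₀; and (iv) sup_{t ∈ [0,T]} ‖h_N'(t) − f(h_N(t),t) − L(t)C(x(t) − h_N(t)) − B u(t)‖ → 0 as N → ∞. Then h_N converges to x̂* uniformly on [0,T]. -/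

import Mathlib

open Set Filter

set_option maxHeartbeats 1000000 in
/-- Convergence of candidate estimators to the exact observer solution:
if `xstar` is the continuously differentiable solution of the observer ODE
`x̂'(t) = f(x̂(t),t) + L(t)C(x(t) − x̂(t)) + B u(t)`, `x̂(0) = x̂₀`, and `h_N` is a sequence
of continuously differentiable candidates that is uniformly bounded, uniformly `β`-Hölder,
whose initial values converge to `x̂₀` and whose physics-informed residuals tend to `0`
uniformly on `[0,T]`, then `h_N → xstar` uniformly on `[0,T]`. -/
theorem stmt_7 (n m p : ℕ) (T β : ℝ) (hT : 0 < T) (hβ : β ∈ Ioc (0 : ℝ) 1)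
    (f : EuclideanSpace ℝ (Fin n) → ℝ → EuclideanSpace ℝ (Fin n))
    (hf_cont : Continuous fun q : EuclideanSpace ℝ (Fin n) × ℝ => f q.1 q.2)
    (K : ℝ)
    (hf_lip : ∀ a b : EuclideanSpace ℝ (Fin n), ∀ t ∈ Icc (0 : ℝ) T,
      ‖f a t - f b t‖ ≤ K * ‖a - b‖)
    (C : Matrix (Fin m) (Fin n) ℝ)
    (L : ℝ → Matrix (Fin n) (Fin m) ℝ) (hL : ContinuousOn L (Icc 0 T))
    (x : ℝ → EuclideanSpace ℝ (Fin n)) (hx : ContinuousOn x (Icc 0 T))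
    (u : ℝ → EuclideanSpace ℝ (Fin p)) (hu : ContinuousOn u (Icc 0 T))
    (B : Matrix (Fin n) (Fin p) ℝ)
    (xhat₀ : EuclideanSpace ℝ (Fin n))
    (xstar : ℝ → EuclideanSpace ℝ (Fin n))
    (hxstar : ∀ t ∈ Icc (0 : ℝ) T,
      HasDerivWithinAt xstar
        (f (xstar t) t + Matrix.toEuclideanLin (L t) (Matrix.toEuclideanLin C (x t - xstar t)) +
          Matrix.toEuclideanLin B (u t)) (Icc 0 T) t)
    (hxstar₀ : xstar 0 = xhat₀)
    (h h' : ℕ → ℝ → EuclideanSpace ℝ (Fin n))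
    (hdiff : ∀ N, ∀ t ∈ Icc (0 : ℝ) T, HasDerivWithinAt (h N) (h' N t) (Icc 0 T) t)
    (hcont : ∀ N, ContinuousOn (h' N) (Icc 0 T))
    (M : ℝ) (hbound : ∀ N, ∀ t ∈ Icc (0 : ℝ) T, ‖h N t‖ ≤ M)
    (C_H : ℝ)
    (hhold : ∀ N, ∀ t₁ ∈ Icc (0 : ℝ) T, ∀ t₂ ∈ Icc (0 : ℝ) T,
      ‖h N t₁ - h N t₂‖ ≤ C_H * |t₁ - t₂| ^ β)
    (hinit : Tendsto (fun N => h N 0) atTop (nhds xhat₀))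
    (hres : TendstoUniformlyOn
      (fun N t => h' N t - f (h N t) t -
        Matrix.toEuclideanLin (L t) (Matrix.toEuclideanLin C (x t - h N t)) -
        Matrix.toEuclideanLin B (u t))
      (fun _ => 0) atTop (Icc 0 T)) :
    TendstoUniformlyOn h xstar atTop (Icc 0 T) := by
  classical
  -- Continuous-linear-map version of `v ↦ L t (C v)`
  set Cl : EuclideanSpace ℝ (Fin n) →L[ℝ] EuclideanSpace ℝ (Fin m) :=
    LinearMap.toContinuousLinearMap (Matrix.toEuclideanLin C) with hCl
  set G : Matrix (Fin n) (Fin m) ℝ →ₗ[ℝ]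
      (EuclideanSpace ℝ (Fin m) →L[ℝ] EuclideanSpace ℝ (Fin n)) :=
    ((LinearMap.toContinuousLinearMap :
        (EuclideanSpace ℝ (Fin m) →ₗ[ℝ] EuclideanSpace ℝ (Fin n)) ≃ₗ[ℝ] _).toLinearMap.comp
      (Matrix.toEuclideanLin :
        Matrix (Fin n) (Fin m) ℝ ≃ₗ[ℝ] _).toLinearMap) with hG
  have hGcont : Continuous G := LinearMap.continuous_of_finiteDimensional G
  set A : ℝ → EuclideanSpace ℝ (Fin n) →L[ℝ] EuclideanSpace ℝ (Fin n) :=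
    fun t => (G (L t)).comp Cl with hA
  have hAapp : ∀ t (v : EuclideanSpace ℝ (Fin n)),
      A t v = Matrix.toEuclideanLin (L t) (Matrix.toEuclideanLin C v) := by
    intro t v
    simp [hA, hG, hCl]
  have hAcont : ContinuousOn A (Icc 0 T) := by
    exact (((ContinuousLinearMap.compL ℝ (EuclideanSpace ℝ (Fin n)) (EuclideanSpace ℝ (Fin m))
      (EuclideanSpace ℝ (Fin n))).flip Cl).continuous.comp hGcont).comp_continuousOn hL
  obtain ⟨K', hK'⟩ := isCompact_Icc.exists_bound_of_continuousOn hAcont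
  set Kt : ℝ := max K 0 + max K' 0 + 1 with hKt
  have hKt0 : 0 < Kt := by
    have := le_max_right K 0; have := le_max_right K' 0; unfold Kt; positivity
  -- Uniform convergence via an ε argument
  rw [Metric.tendstoUniformlyOn_iff]
  intro ε hε
  set c := Real.exp (Kt * T) with hc
  have hcpos : 0 < c := Real.exp_pos _
  set δ' := ε / (2 * (c + c / Kt + 1)) with hδ'
  have hδ'pos : 0 < δ' := by
    have : 0 < c + c / Kt + 1 := by positivity
    positivity
  have h1 : ∀ᶠ N in atTop, dist (h N 0) xhat₀ < δ' :=
    (Metric.tendsto_nhds.1 hinit) δ' hδ'pos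
  have h2 := (Metric.tendstoUniformlyOn_iff.1 hres) δ' hδ'pos
  filter_upwards [h1, h2] with N hN1 hN2
  intro t ht
  set e : ℝ → EuclideanSpace ℝ (Fin n) := fun s => h N s - xstar s with he
  set e' : ℝ → EuclideanSpace ℝ (Fin n) := fun s => h' N s -
    (f (xstar s) s + Matrix.toEuclideanLin (L s) (Matrix.toEuclideanLin C (x s - xstar s)) +
      Matrix.toEuclideanLin B (u s)) with he'
  have hecont : ContinuousOn e (Icc 0 T) := fun s hs =>
    ((hdiff N s hs).sub (hxstar s hs)).continuousWithinAt
  have hederiv : ∀ s ∈ Ico 0 T, HasDerivWithinAt e (e' s) (Ici s) s := fun s hs =>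
    ((hdiff N s (Ico_subset_Icc_self hs)).sub (hxstar s (Ico_subset_Icc_self hs))).mono_of_mem_nhdsWithin
      (Icc_mem_nhdsGE_of_mem hs)
  have hbnd : ∀ s ∈ Ico 0 T, ‖e' s‖ ≤ Kt * ‖e s‖ + δ' := by
    intro s hs
    have hs' := Ico_subset_Icc_self hs
    have hkey : e' s = (h' N s - f (h N s) s -
        Matrix.toEuclideanLin (L s) (Matrix.toEuclideanLin C (x s - h N s)) -
        Matrix.toEuclideanLin B (u s)) + (f (h N s) s - f (xstar s) s) +
        A s (xstar s - h N s) := by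
      rw [hAapp]
      simp only [he', map_sub]
      abel
    have hr : ‖h' N s - f (h N s) s -
        Matrix.toEuclideanLin (L s) (Matrix.toEuclideanLin C (x s - h N s)) -
        Matrix.toEuclideanLin B (u s)‖ ≤ δ' := by
      have := hN2 s hs'
      rw [dist_comm, dist_zero_right] at this
      exact this.le
    have hfl : ‖f (h N s) s - f (xstar s) s‖ ≤ max K 0 * ‖e s‖ := by
      rcases eq_or_ne (h N s) (xstar s) with heq | hne
      · simp [he, heq, sub_self]
      · have h0 := hf_lip (h N s) (xstar s) s hs'
        have hpos : 0 < ‖h N s - xstar s‖ := by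
          rwa [norm_pos_iff, sub_ne_zero]
        calc ‖f (h N s) s - f (xstar s) s‖ ≤ K * ‖h N s - xstar s‖ := h0
          _ ≤ max K 0 * ‖e s‖ := by
              apply mul_le_mul_of_nonneg_right (le_max_left _ _) (norm_nonneg _)
    have hAl : ‖A s (xstar s - h N s)‖ ≤ max K' 0 * ‖e s‖ := by
      calc ‖A s (xstar s - h N s)‖ ≤ ‖A s‖ * ‖xstar s - h N s‖ := (A s).le_opNorm _
        _ ≤ max K' 0 * ‖e s‖ := by
            rw [norm_sub_rev]
            exact mul_le_mul_of_nonneg_right (le_trans (hK' s hs') (le_max_left _ _))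
              (norm_nonneg _)
    calc ‖e' s‖ ≤ ‖h' N s - f (h N s) s -
        Matrix.toEuclideanLin (L s) (Matrix.toEuclideanLin C (x s - h N s)) -
        Matrix.toEuclideanLin B (u s)‖ + ‖f (h N s) s - f (xstar s) s‖ +
        ‖A s (xstar s - h N s)‖ := hkey ▸ norm_add₃_le
      _ ≤ δ' + max K 0 * ‖e s‖ + max K' 0 * ‖e s‖ :=
          add_le_add (add_le_add hr hfl) hAl
      _ ≤ Kt * ‖e s‖ + δ' := by
          have hKle : max K 0 + max K' 0 ≤ Kt := by rw [hKt]; linarith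
          have h3 := mul_le_mul_of_nonneg_right hKle (norm_nonneg (e s))
          rw [add_mul] at h3
          linarith
  have he0 : ‖e 0‖ ≤ δ' := by
    have heq : e 0 = h N 0 - xhat₀ := by
      show h N 0 - xstar 0 = _
      rw [hxstar₀]
    rw [heq, ← dist_eq_norm]
    exact hN1.le
  have hgron := norm_le_gronwallBound_of_norm_deriv_right_le hecont hederiv he0 hbnd t ht
  have hbound2 : gronwallBound δ' Kt δ' (t - 0) ≤ δ' * c + δ' / Kt * c := by
    rw [gronwallBound_of_K_ne_0 hKt0.ne']
    have hexp : Real.exp (Kt * (t - 0)) ≤ c := by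
      rw [hc]
      exact Real.exp_le_exp.2 (by nlinarith [ht.1, ht.2])
    have h1' : δ' * Real.exp (Kt * (t - 0)) ≤ δ' * c :=
      mul_le_mul_of_nonneg_left hexp hδ'pos.le
    have h2' : δ' / Kt * (Real.exp (Kt * (t - 0)) - 1) ≤ δ' / Kt * c := by
      apply mul_le_mul_of_nonneg_left _ (by positivity)
      linarith
    simpa using add_le_add h1' h2'
  have hfin : δ' * c + δ' / Kt * c < ε := by
    have hck : 0 < c / Kt := by positivity
    have key : δ' * (2 * (c + c / Kt + 1)) = ε := by
      rw [hδ']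
      field_simp
    have e1 : δ' * c + δ' / Kt * c = δ' * (c + c / Kt) := by ring
    have e2 : δ' * (c + c / Kt) < δ' * (2 * (c + c / Kt + 1)) :=
      mul_lt_mul_of_pos_left (by linarith) hδ'pos
    rw [e1, ← key]
    exact e2
  have hdist : dist (xstar t) (h N t) = ‖e t‖ := by
    rw [dist_eq_norm, norm_sub_rev]
  rw [hdist]
  exact lt_of_le_of_lt (le_trans hgron hbound2) hfin
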